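/- Let p⃗ ∈ (0,1]ⁿ and η ∈ (0, p̲) where p̲ := min{min_i pᵢ, 1}. Then for any sequence of complex numbers {λ_i}_{i∈ℕ} and any sequence of dilated balls {B^{(i)}}_{i∈ℕ} ⊂ 𝔅, ∑_{i∈ℕ} |λ_i| ≤ ‖ ( ∑_{i∈ℕ} [ |λ_i| χ_{B^{(i)}} / ‖χ_{B^{(i)}}‖_{L^{p⃗}} ]^η )^{1/η} ‖_{L^{p⃗}}. -/

import Mathlib

open MeasureTheory ENNReal Set Filter Pointwise
open scoped Classical

noncomputable section

/-- One step of the iterated mixed Lebesgue norm: the `L^p(ℝ)`-norm in one real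
variable, with the usual modification (essential supremum) when `p = ∞`. -/
def lpStep (p : ℝ≥0∞) (g : ℝ → ℝ≥0∞) : ℝ≥0∞ :=
  if p = ∞ then essSup g volume
  else (∫⁻ t, (g t) ^ p.toReal) ^ (1 / p.toReal)

/-- The iterated mixed Lebesgue norm of an `ℝ≥0∞`-valued function on `ℝⁿ`:
the innermost integral is in the first variable, with exponent `p 0`. -/
def mixedNorm : (n : ℕ) → (Fin n → ℝ≥0∞) → ((Fin n → ℝ) → ℝ≥0∞) → ℝ≥0∞
  | 0, _, F => F finZeroElim
  | (n + 1), p, F =>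
      mixedNorm n (fun i => p i.succ) (fun x => lpStep (p 0) (fun t => F (Fin.cons t x)))

/-- The mixed-norm Lebesgue quasi-norm `‖f‖_{L^{p⃗}}` of a real-valued function. -/
def mixedLp {n : ℕ} (p : Fin n → ℝ≥0∞) (f : (Fin n → ℝ) → ℝ) : ℝ≥0∞ :=
  mixedNorm n p fun x => ENNReal.ofReal |f x|

/-- `A` is an expansive dilation: every (complex) eigenvalue has modulus `> 1`. -/
def IsExpansive {n : ℕ} (A : Matrix (Fin n) (Fin n) ℝ) : Prop :=
  ∀ z ∈ spectrum ℂ (A.map (algebraMap ℝ ℂ)), 1 < ‖z‖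

/-- The dilated set `B_k := A^k Δ`, `k ∈ ℤ`. -/
def Bk {n : ℕ} (A : Matrix (Fin n) (Fin n) ℝ) (Δ : Set (Fin n → ℝ)) (k : ℤ) :
    Set (Fin n → ℝ) :=
  (fun x => (A ^ k).mulVec x) '' Δ

/-- The dilated ball `x₀ + B_k`. -/
def dBall {n : ℕ} (A : Matrix (Fin n) (Fin n) ℝ) (Δ : Set (Fin n → ℝ))
    (x₀ : Fin n → ℝ) (k : ℤ) : Set (Fin n → ℝ) :=
  (fun y => x₀ + y) '' Bk A Δ k

/-- `‖χ_S‖_{L^{p⃗}}`, the mixed norm of the characteristic function of `S`. -/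
def chiNorm {n : ℕ} (p : Fin n → ℝ≥0∞) (S : Set (Fin n → ℝ)) : ℝ≥0∞ :=
  mixedNorm n p (S.indicator fun _ => (1 : ℝ≥0∞))

/-- The standing assumptions on an expansive dilation `A` and the associated
ellipsoid `Δ` (of Lebesgue measure `1`, with `Δ ⊂ rΔ ⊂ AΔ`). -/
structure IsDilationSetup {n : ℕ} (A : Matrix (Fin n) (Fin n) ℝ)
    (Δ : Set (Fin n → ℝ)) (r : ℝ) : Prop where
  expansive : IsExpansive A
  det_isUnit : IsUnit A.det
  isOpen : IsOpen Δ
  zero_mem : 0 ∈ Δ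
  bounded : Bornology.IsBounded Δ
  convex : Convex ℝ Δ
  symmetric : ∀ x ∈ Δ, -x ∈ Δ
  volume_eq_one : volume Δ = 1
  one_lt_r : 1 < r
  subset_smul : Δ ⊆ r • Δ
  smul_subset : r • Δ ⊆ (fun x => A.mulVec x) '' Δ



/-!
For `p ≤ 1` the one-variable `L^p` quasi-norm is superadditive on nonnegative functions (reverse
Minkowski): integrating the concavity inequality
`a^(1-q) u^q + b^(1-q) v^q ≤ (a+b)^(1-q) (u+v)^q` with `a, b` the norms of `f, g` gives
`(‖f‖ + ‖g‖)^q ≤ ‖f + g‖^q`. Superadditivity passes through the iterated mixed norm. Since a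
dilated ball is open, nonempty and bounded, `‖χ_B‖` is positive and finite, so `|λᵢ|` is the mixed
norm of the normalised atom `|λᵢ| χ_{Bᵢ} / ‖χ_{Bᵢ}‖`; hence every finite partial sum of the `|λᵢ|`
is at most the norm of the sum of the atoms, which is dominated pointwise by the `ℓ^η` sum as
`η ≤ 1`.
-/

open scoped NNReal

theorem Real.rpow_mul_rpow_add_le {q a b u v : ℝ} (hq0 : 0 < q) (hq1 : q ≤ 1)
    (ha : 0 ≤ a) (hb : 0 ≤ b) (hab : 0 < a + b) (hu : 0 ≤ u) (hv : 0 ≤ v) :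
    a ^ (1 - q) * u ^ q + b ^ (1 - q) * v ^ q ≤ (a + b) ^ (1 - q) * (u + v) ^ q := by
  rcases (add_nonneg hu hv).eq_or_lt with huv | huv
  · obtain ⟨rfl, rfl⟩ : u = 0 ∧ v = 0 := ⟨by linarith, by linarith⟩
    simp [Real.zero_rpow hq0.ne']
  set s := a + b
  set w := u + v
  have hsw : 0 < s ^ (1 - q) * w ^ q := by positivity
  -- weighted AM-GM after normalising `(a, b)` by `s` and `(u, v)` by `w`
  have amgm : ∀ x z, 0 ≤ x → 0 ≤ z →
      x ^ (1 - q) * z ^ q ≤ s ^ (1 - q) * w ^ q * ((1 - q) * (x / s) + q * (z / w)) := by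
    intro x z hx hz
    have := Real.geom_mean_le_arith_mean2_weighted (w₁ := 1 - q) (by linarith) hq0.le
      (div_nonneg hx hab.le) (div_nonneg hz huv.le) (by ring)
    rw [Real.div_rpow hx hab.le, Real.div_rpow hz huv.le, div_mul_div_comm,
      div_le_iff₀ hsw] at this
    linarith
  calc a ^ (1 - q) * u ^ q + b ^ (1 - q) * v ^ q
      ≤ s ^ (1 - q) * w ^ q * ((1 - q) * (a / s) + q * (u / w))
        + s ^ (1 - q) * w ^ q * ((1 - q) * (b / s) + q * (v / w)) :=
        add_le_add (amgm a u ha hu) (amgm b v hb hv)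
    _ = s ^ (1 - q) * w ^ q := by field_simp; ring

theorem ENNReal.rpow_mul_rpow_add_le {q : ℝ} (hq0 : 0 < q) (hq1 : q ≤ 1) {a b : ℝ≥0∞}
    (ha : a ≠ ∞) (hb : b ≠ ∞) (hab : a + b ≠ 0) (u v : ℝ≥0∞) :
    a ^ (1 - q) * u ^ q + b ^ (1 - q) * v ^ q ≤ (a + b) ^ (1 - q) * (u + v) ^ q := by
  have hab' : (a + b) ^ (1 - q) ≠ 0 :=
    (ENNReal.rpow_pos (pos_iff_ne_zero.mpr hab) (ENNReal.add_ne_top.mpr ⟨ha, hb⟩)).ne'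
  rcases eq_or_ne u ∞ with rfl | hu
  · simp [ENNReal.top_rpow_of_pos hq0, ENNReal.mul_top hab']
  rcases eq_or_ne v ∞ with rfl | hv
  · simp [ENNReal.top_rpow_of_pos hq0, ENNReal.mul_top hab']
  lift a to ℝ≥0 using ha
  lift b to ℝ≥0 using hb
  lift u to ℝ≥0 using hu
  lift v to ℝ≥0 using hv
  have h1q : ∀ x : ℝ≥0, ((x ^ (1 - q) : ℝ≥0) : ℝ≥0∞) = (x : ℝ≥0∞) ^ (1 - q) :=
    fun x => ENNReal.coe_rpow_of_nonneg x (by linarith)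
  have hq : ∀ x : ℝ≥0, ((x ^ q : ℝ≥0) : ℝ≥0∞) = (x : ℝ≥0∞) ^ q :=
    fun x => ENNReal.coe_rpow_of_nonneg x hq0.le
  rw [← ENNReal.coe_add, ← ENNReal.coe_add, ← h1q, ← h1q, ← h1q, ← hq, ← hq, ← hq]
  norm_cast
  rw [← NNReal.coe_le_coe]
  push_cast
  refine Real.rpow_mul_rpow_add_le hq0 hq1 a.2 b.2 ?_ u.2 v.2
  exact_mod_cast pos_iff_ne_zero.mpr (by exact_mod_cast hab)

theorem ENNReal.rpow_sum_le_sum_rpow {ι : Type*} (s : Finset ι) (f : ι → ℝ≥0∞) {η : ℝ}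
    (hη0 : 0 < η) (hη1 : η ≤ 1) : (∑ i ∈ s, f i) ^ η ≤ ∑ i ∈ s, f i ^ η := by
  induction s using Finset.induction with
  | empty => simp [ENNReal.zero_rpow_of_pos hη0]
  | insert a s ha ih =>
    rw [Finset.sum_insert ha, Finset.sum_insert ha]
    exact (ENNReal.rpow_add_le_add_rpow _ _ hη0.le hη1).trans (add_le_add_right ih _)

section lpStep

variable {p : ℝ≥0∞}

theorem lpStep_mono {g h : ℝ → ℝ≥0∞} (hgh : g ≤ h) : lpStep p g ≤ lpStep p h := by
  unfold lpStep
  split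
  · exact essSup_mono_ae (.of_forall hgh)
  · gcongr with t
    exact hgh t

theorem lpStep_rpow_toReal (hp0 : p ≠ 0) (hpt : p ≠ ∞) (g : ℝ → ℝ≥0∞) :
    lpStep p g ^ p.toReal = ∫⁻ t, g t ^ p.toReal := by
  rw [lpStep, if_neg hpt, one_div, ENNReal.rpow_inv_rpow (ENNReal.toReal_pos hp0 hpt).ne']

theorem lpStep_const_mul (hp0 : p ≠ 0) (hpt : p ≠ ∞) {c : ℝ≥0∞} (hc : c ≠ ∞)
    (g : ℝ → ℝ≥0∞) : lpStep p (fun t => c * g t) = c * lpStep p g := by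
  have hq : 0 < p.toReal := ENNReal.toReal_pos hp0 hpt
  simp only [lpStep, if_neg hpt, ENNReal.mul_rpow_of_nonneg _ _ hq.le]
  rw [lintegral_const_mul' _ _ (ENNReal.rpow_ne_top_of_nonneg hq.le hc),
    ENNReal.mul_rpow_of_nonneg _ _ (by positivity), ← ENNReal.rpow_mul, mul_one_div_cancel hq.ne',
    ENNReal.rpow_one]

theorem lpStep_mul_const (hp0 : p ≠ 0) (hpt : p ≠ ∞) {c : ℝ≥0∞} (hc : c ≠ ∞)
    (g : ℝ → ℝ≥0∞) : lpStep p (fun t => g t * c) = lpStep p g * c := by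
  simp only [mul_comm _ c, lpStep_const_mul hp0 hpt hc]

theorem lpStep_indicator_one (hp0 : p ≠ 0) (hpt : p ≠ ∞) {S : Set ℝ} (hS : MeasurableSet S) :
    lpStep p (S.indicator fun _ => 1) = volume S ^ (1 / p.toReal) := by
  have hq : 0 < p.toReal := ENNReal.toReal_pos hp0 hpt
  have hpow : (fun t => S.indicator (fun _ => (1 : ℝ≥0∞)) t ^ p.toReal) = S.indicator 1 := by
    ext t
    by_cases ht : t ∈ S <;> simp [ht, ENNReal.zero_rpow_of_pos hq]
  rw [lpStep, if_neg hpt, hpow, lintegral_indicator_one hS]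

theorem lpStep_add_le_lpStep_add (hp0 : p ≠ 0) (hp1 : p ≤ 1) (f g : ℝ → ℝ≥0∞) :
    lpStep p f + lpStep p g ≤ lpStep p (f + g) := by
  have hpt : p ≠ ∞ := ne_top_of_le_ne_top one_ne_top hp1
  set q := p.toReal
  have hq0 : 0 < q := ENNReal.toReal_pos hp0 hpt
  have hq1 : q ≤ 1 := ENNReal.toReal_le_of_le_ofReal zero_le_one (by simpa using hp1)
  set F := lpStep p f
  set G := lpStep p g
  set H := lpStep p (f + g)
  have hFH : F ≤ H := lpStep_mono fun t => le_self_add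
  have hGH : G ≤ H := lpStep_mono fun t => le_add_self
  rcases eq_or_ne F ∞ with hF | hF
  · simp [hF, top_le_iff.mp (hF ▸ hFH)]
  rcases eq_or_ne G ∞ with hG | hG
  · simp [hG, top_le_iff.mp (hG ▸ hGH)]
  rcases eq_or_ne (F + G) 0 with hFG | hFG
  · exact hFG ▸ zero_le
  have hFGt : F + G ≠ ∞ := ENNReal.add_ne_top.mpr ⟨hF, hG⟩
  have hc : (F + G) ^ (1 - q) ≠ ∞ := ENNReal.rpow_ne_top_of_nonneg (by linarith) hFGt
  have hc0 : (F + G) ^ (1 - q) ≠ 0 := (ENNReal.rpow_pos (pos_iff_ne_zero.mpr hFG) hFGt).ne'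
  have hsplit : ∀ x : ℝ≥0∞, x ^ (1 - q) * x ^ q = x := fun x => by
    rw [← ENNReal.rpow_add_of_nonneg (1 - q) q (by linarith) hq0.le, sub_add_cancel,
      ENNReal.rpow_one]
  have key : (F + G) ^ (1 - q) * (F + G) ^ q ≤ (F + G) ^ (1 - q) * H ^ q := calc
    (F + G) ^ (1 - q) * (F + G) ^ q = F ^ (1 - q) * F ^ q + G ^ (1 - q) * G ^ q := by
      rw [hsplit, hsplit, hsplit]
    _ = (∫⁻ t, F ^ (1 - q) * f t ^ q) + ∫⁻ t, G ^ (1 - q) * g t ^ q := by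
      rw [lintegral_const_mul' _ _ (ENNReal.rpow_ne_top_of_nonneg (by linarith) hF),
        lintegral_const_mul' _ _ (ENNReal.rpow_ne_top_of_nonneg (by linarith) hG),
        lpStep_rpow_toReal hp0 hpt, lpStep_rpow_toReal hp0 hpt]
    _ ≤ ∫⁻ t, (F ^ (1 - q) * f t ^ q + G ^ (1 - q) * g t ^ q) := le_lintegral_add _ _
    _ ≤ ∫⁻ t, (F + G) ^ (1 - q) * (f t + g t) ^ q :=
      lintegral_mono fun t => ENNReal.rpow_mul_rpow_add_le hq0 hq1 hF hG hFG _ _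
    _ = (F + G) ^ (1 - q) * H ^ q := by
      rw [lintegral_const_mul' _ _ hc, lpStep_rpow_toReal hp0 hpt]; rfl
  rwa [ENNReal.mul_le_mul_iff_right hc0 hc, ENNReal.rpow_le_rpow_iff hq0] at key

end lpStep

section mixedNorm

variable {n : ℕ}

theorem mixedNorm_mono (p : Fin n → ℝ≥0∞) {F G : (Fin n → ℝ) → ℝ≥0∞} (hFG : F ≤ G) :
    mixedNorm n p F ≤ mixedNorm n p G := by
  induction n with
  | zero => exact hFG _
  | succ n ih => exact ih _ fun x => lpStep_mono fun t => hFG _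

theorem mixedNorm_const_mul {p : Fin n → ℝ≥0∞} (hp0 : ∀ i, p i ≠ 0) (hpt : ∀ i, p i ≠ ∞)
    {c : ℝ≥0∞} (hc : c ≠ ∞) (F : (Fin n → ℝ) → ℝ≥0∞) :
    mixedNorm n p (fun x => c * F x) = c * mixedNorm n p F := by
  induction n with
  | zero => rfl
  | succ n ih =>
    rw [mixedNorm, mixedNorm, ← ih (fun i => hp0 i.succ) (fun i => hpt i.succ)]
    simp only [lpStep_const_mul (hp0 0) (hpt 0) hc]

theorem mixedNorm_add_le_mixedNorm_add {p : Fin n → ℝ≥0∞} (hp0 : ∀ i, p i ≠ 0)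
    (hp1 : ∀ i, p i ≤ 1) (F G : (Fin n → ℝ) → ℝ≥0∞) :
    mixedNorm n p F + mixedNorm n p G ≤ mixedNorm n p (F + G) := by
  induction n with
  | zero => exact le_rfl
  | succ n ih =>
    exact (ih (fun i => hp0 i.succ) (fun i => hp1 i.succ) _ _).trans
      (mixedNorm_mono _ fun x => lpStep_add_le_lpStep_add (hp0 0) (hp1 0) _ _)

theorem sum_mixedNorm_le_mixedNorm_sum {p : Fin n → ℝ≥0∞} (hp0 : ∀ i, p i ≠ 0)
    (hp1 : ∀ i, p i ≤ 1) {ι : Type*} (s : Finset ι) (F : ι → (Fin n → ℝ) → ℝ≥0∞) :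
    ∑ i ∈ s, mixedNorm n p (F i) ≤ mixedNorm n p (∑ i ∈ s, F i) := by
  induction s using Finset.induction with
  | empty => exact zero_le
  | insert a s ha ih =>
    rw [Finset.sum_insert ha, Finset.sum_insert ha]
    exact (add_le_add_right ih _).trans (mixedNorm_add_le_mixedNorm_add hp0 hp1 _ _)

end mixedNorm

section chiNorm

variable {n : ℕ}

theorem chiNorm_mono (p : Fin n → ℝ≥0∞) {S T : Set (Fin n → ℝ)} (hST : S ⊆ T) :
    chiNorm p S ≤ chiNorm p T :=
  mixedNorm_mono p fun _ => Set.indicator_le_indicator_of_subset hST (fun _ => zero_le) _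

theorem chiNorm_univ_pi {p : Fin n → ℝ≥0∞} (hp0 : ∀ i, p i ≠ 0) (hpt : ∀ i, p i ≠ ∞)
    {S : Fin n → Set ℝ} (hS : ∀ i, MeasurableSet (S i)) (hSt : ∀ i, volume (S i) ≠ ∞) :
    chiNorm p (Set.univ.pi S) = ∏ i, volume (S i) ^ (1 / (p i).toReal) := by
  induction n with
  | zero => simp [chiNorm, mixedNorm]
  | succ n ih =>
    have hcons : ∀ t x, (Set.univ.pi S).indicator (fun _ => (1 : ℝ≥0∞)) (Fin.cons t x) =
        (S 0).indicator (fun _ => 1) t *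
          (Set.univ.pi fun i : Fin n => S i.succ).indicator (fun _ => 1) x := by
      intro t x
      simp only [Set.indicator_apply, Set.mem_univ_pi, Fin.forall_fin_succ, Fin.cons_zero,
        Fin.cons_succ]
      split_ifs <;> simp_all
    have hind : ∀ x,
        (Set.univ.pi fun i : Fin n => S i.succ).indicator (fun _ => (1 : ℝ≥0∞)) x ≠ ∞ :=
      fun x => ne_top_of_le_ne_top one_ne_top (Set.indicator_le (fun _ _ => le_rfl) x)
    rw [chiNorm, mixedNorm]
    simp only [hcons, lpStep_mul_const (hp0 0) (hpt 0) (hind _),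
      lpStep_indicator_one (hp0 0) (hpt 0) (hS 0)]
    rw [mixedNorm_const_mul (fun i => hp0 i.succ) (fun i => hpt i.succ)
      (ENNReal.rpow_ne_top_of_nonneg (by positivity) (hSt 0)),
      Fin.prod_univ_succ]
    exact congrArg (_ * ·) (ih (fun i => hp0 i.succ) (fun i => hpt i.succ) (fun i => hS i.succ)
      fun i => hSt i.succ)

theorem chiNorm_ball {p : Fin n → ℝ≥0∞} (hp0 : ∀ i, p i ≠ 0) (hpt : ∀ i, p i ≠ ∞)
    (z : Fin n → ℝ) {ε : ℝ} (hε : 0 < ε) :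
    chiNorm p (Metric.ball z ε) = ∏ i, ENNReal.ofReal (2 * ε) ^ (1 / (p i).toReal) := by
  rw [ball_pi z hε, chiNorm_univ_pi hp0 hpt (fun _ => measurableSet_ball)
    (fun _ => measure_ball_lt_top.ne)]
  simp only [Real.volume_ball]

theorem chiNorm_pos_of_isOpen {p : Fin n → ℝ≥0∞} (hp0 : ∀ i, p i ≠ 0) (hpt : ∀ i, p i ≠ ∞)
    {S : Set (Fin n → ℝ)} (hS : IsOpen S) (hne : S.Nonempty) : 0 < chiNorm p S := by
  obtain ⟨z, hz⟩ := hne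
  obtain ⟨ε, hε, hball⟩ := Metric.isOpen_iff.mp hS z hz
  refine lt_of_lt_of_le ?_ (chiNorm_mono p hball)
  rw [chiNorm_ball hp0 hpt z hε, pos_iff_ne_zero, Finset.prod_ne_zero_iff]
  exact fun i _ => (ENNReal.rpow_pos (by simpa using hε) ofReal_ne_top).ne'

theorem chiNorm_lt_top_of_isBounded {p : Fin n → ℝ≥0∞} (hp0 : ∀ i, p i ≠ 0)
    (hpt : ∀ i, p i ≠ ∞) {S : Set (Fin n → ℝ)} (hS : Bornology.IsBounded S) :
    chiNorm p S < ∞ := by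
  obtain ⟨R, hR, hSR⟩ := hS.subset_ball_lt 0 0
  refine (chiNorm_mono p hSR).trans_lt ?_
  rw [chiNorm_ball hp0 hpt 0 hR]
  exact ENNReal.prod_lt_top fun i _ => ENNReal.rpow_lt_top_of_nonneg (by positivity) ofReal_ne_top

theorem mixedNorm_mul_indicator_div_chiNorm {p : Fin n → ℝ≥0∞} (hp0 : ∀ i, p i ≠ 0)
    (hpt : ∀ i, p i ≠ ∞) {S : Set (Fin n → ℝ)} (hS0 : chiNorm p S ≠ 0) (hSt : chiNorm p S ≠ ∞)
    {c : ℝ≥0∞} (hc : c ≠ ∞) :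
    mixedNorm n p (fun x => c * S.indicator (fun _ => 1) x / chiNorm p S) = c := by
  simp only [div_eq_mul_inv, mul_right_comm c]
  rw [mixedNorm_const_mul hp0 hpt (ENNReal.mul_ne_top hc (ENNReal.inv_ne_top.mpr hS0)),
    mul_assoc]
  change c * ((chiNorm p S)⁻¹ * chiNorm p S) = c
  rw [ENNReal.inv_mul_cancel hS0 hSt, mul_one]

end chiNorm

section dBall

variable {n : ℕ} {A : Matrix (Fin n) (Fin n) ℝ} {Δ : Set (Fin n → ℝ)}

theorem Bk_eq_preimage (hA : IsUnit A.det) (k : ℤ) :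
    Bk A Δ k = (fun y => ((A ^ k)⁻¹).mulVec y) ⁻¹' Δ := by
  have hdet : IsUnit (A ^ k).det := hA.det_zpow k
  ext y
  constructor
  · rintro ⟨x, hx, rfl⟩
    simpa [Matrix.mulVec_mulVec, Matrix.nonsing_inv_mul _ hdet] using hx
  · intro hy
    exact ⟨_, hy, by simp [Matrix.mulVec_mulVec, Matrix.mul_nonsing_inv _ hdet]⟩

theorem dBall_isOpen (hA : IsUnit A.det) (hΔ : IsOpen Δ) (x₀ : Fin n → ℝ) (k : ℤ) :
    IsOpen (dBall A Δ x₀ k) := by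
  have hBk : IsOpen (Bk A Δ k) := by
    rw [Bk_eq_preimage hA]
    exact hΔ.preimage (continuous_const.matrix_mulVec continuous_id)
  exact (Homeomorph.addLeft x₀).isOpenMap _ hBk

theorem dBall_isBounded (hΔ : Bornology.IsBounded Δ) (x₀ : Fin n → ℝ) (k : ℤ) :
    Bornology.IsBounded (dBall A Δ x₀ k) := by
  have hBk : Bornology.IsBounded (Bk A Δ k) :=
    (Matrix.mulVecLin (A ^ k)).toContinuousLinearMap.lipschitz.isBounded_image hΔ
  exact (isometry_add_left x₀).lipschitz.isBounded_image hBk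

theorem dBall_nonempty (hΔ : 0 ∈ Δ) (x₀ : Fin n → ℝ) (k : ℤ) : (dBall A Δ x₀ k).Nonempty :=
  ⟨x₀, 0, ⟨0, hΔ, Matrix.mulVec_zero _⟩, add_zero x₀⟩

end dBall

theorem sum_abs_le_seqNorm_general {n : ℕ}
    (A : Matrix (Fin n) (Fin n) ℝ) (Δ : Set (Fin n → ℝ)) (r : ℝ)
    (h : IsDilationSetup A Δ r) (p : Fin n → ℝ≥0∞)
    (hp : ∀ i, 0 < p i ∧ p i ≤ 1) (η : ℝ) (hη0 : 0 < η)
    (hη : ENNReal.ofReal η < min (⨅ i, p i) 1)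
    (lam : ℕ → ℂ) (xc : ℕ → Fin n → ℝ) (lc : ℕ → ℤ) :
    ∑' i, ENNReal.ofReal ‖lam i‖ ≤
      mixedNorm n p fun x =>
        (∑' i, ((ENNReal.ofReal ‖lam i‖ *
          (dBall A Δ (xc i) (lc i)).indicator (fun _ => (1 : ℝ≥0∞)) x) /
          chiNorm p (dBall A Δ (xc i) (lc i))) ^ η) ^ (1 / η) := by
  have hp0 : ∀ i, p i ≠ 0 := fun i => (hp i).1.ne'
  have hp1 : ∀ i, p i ≤ 1 := fun i => (hp i).2
  have hpt : ∀ i, p i ≠ ∞ := fun i => ne_top_of_le_ne_top one_ne_top (hp1 i)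
  have hη1 : η ≤ 1 := (ENNReal.ofReal_lt_one.mp (hη.trans_le (min_le_right _ _))).le
  set B := fun i => dBall A Δ (xc i) (lc i)
  set atom := fun i x => ENNReal.ofReal ‖lam i‖ * (B i).indicator (fun _ => 1) x / chiNorm p (B i)
  have hatom : ∀ i, mixedNorm n p (atom i) = ENNReal.ofReal ‖lam i‖ := fun i =>
    mixedNorm_mul_indicator_div_chiNorm hp0 hpt
      (chiNorm_pos_of_isOpen hp0 hpt (dBall_isOpen h.det_isUnit h.isOpen _ _)
        (dBall_nonempty h.zero_mem _ _)).ne'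
      (chiNorm_lt_top_of_isBounded hp0 hpt (dBall_isBounded h.bounded _ _)).ne ofReal_ne_top
  rw [ENNReal.tsum_eq_iSup_sum]
  refine iSup_le fun s => ?_
  calc ∑ i ∈ s, ENNReal.ofReal ‖lam i‖
      = ∑ i ∈ s, mixedNorm n p (atom i) := by simp only [hatom]
    _ ≤ mixedNorm n p (∑ i ∈ s, atom i) := sum_mixedNorm_le_mixedNorm_sum hp0 hp1 s atom
    _ ≤ mixedNorm n p fun x => (∑' i, atom i x ^ η) ^ (1 / η) := mixedNorm_mono p fun x => by
      rw [Finset.sum_apply, ← ENNReal.rpow_le_rpow_iff hη0, ← ENNReal.rpow_mul,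
        one_div_mul_cancel hη0.ne', ENNReal.rpow_one]
      exact (ENNReal.rpow_sum_le_sum_rpow s _ hη0 hη1).trans (ENNReal.sum_le_tsum s)

/-- For `p⃗ ∈ (0,1]ⁿ` and `η ∈ (0, p̲)`:
`∑ᵢ |λᵢ| ≤ ‖ ( ∑ᵢ [ |λᵢ| χ_{B^{(i)}} / ‖χ_{B^{(i)}}‖_{L^{p⃗}} ]^η )^{1/η} ‖_{L^{p⃗}}`. -/
theorem sum_abs_le_seqNorm {n : ℕ} (hn : 0 < n)
    (A : Matrix (Fin n) (Fin n) ℝ) (Δ : Set (Fin n → ℝ)) (r : ℝ)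
    (h : IsDilationSetup A Δ r) (p : Fin n → ℝ≥0∞)
    (hp : ∀ i, 0 < p i ∧ p i ≤ 1) (η : ℝ) (hη0 : 0 < η)
    (hη : ENNReal.ofReal η < min (⨅ i, p i) 1)
    (lam : ℕ → ℂ) (xc : ℕ → Fin n → ℝ) (lc : ℕ → ℤ) :
    ∑' i, ENNReal.ofReal ‖lam i‖ ≤
      mixedNorm n p fun x =>
        (∑' i, ((ENNReal.ofReal ‖lam i‖ *
          (dBall A Δ (xc i) (lc i)).indicator (fun _ => (1 : ℝ≥0∞)) x) /
          chiNorm p (dBall A Δ (xc i) (lc i))) ^ η) ^ (1 / η) :=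
  sum_abs_le_seqNorm_general A Δ r h p hp η hη0 hη lam xc lc
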